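/- arXiv:2001.09787 — 5 statements merged into one kernel-verified Lean document; each statement's English description precedes it below -/
import Mathlib

section
/- Let C be a finitely complete category, F an endofunctor of C admitting a final F-coalgebra. For any bisimulation a ←(r_a)− r −(r_b)→ b of F-coalgebras a and b, there exists a unique monomorphism f from the carrier of r into the pullback P of the cospan (carrier a) −⟦a⟧→ (carrier of final) ←⟦b⟧− (carrier b) such that r_a = p_a ∘ f and r_b = p_b ∘ f, where p_a, p_b are the pullback projections and ⟦a⟧, ⟦b⟧ are the anamorphisms. -/
open CategoryTheory CategoryTheory.Limits

/-! A jointly monic span `a ← r → b` that commutes with the anamorphisms (every span of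
coalgebra morphisms does, by finality) factors through the pullback of `⟦a⟧` and `⟦b⟧`; the
factorisation is unique by the universal property and monic by joint monicity. -/

/-- A bisimulation of `F`-coalgebras `a` and `b` is a span of coalgebra morphisms
`a ← r → b` whose underlying span of carriers is jointly monic. -/
def IsBisimulation {C : Type*} [Category C] {F : C ⥤ C}
    {a b r : Endofunctor.Coalgebra F} (ra : r ⟶ a) (rb : r ⟶ b) : Prop :=
  ∀ ⦃Z : C⦄ (h h' : Z ⟶ r.V),
    h ≫ ra.f = h' ≫ ra.f → h ≫ rb.f = h' ≫ rb.f → h = h'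

namespace CategoryTheory

theorem JointlyMono₂.mono_pullback_lift {C : Type*} [Category C] {X Y S R : C}
    {u : X ⟶ S} {v : Y ⟶ S} [HasPullback u v] {p : R ⟶ X} {q : R ⟶ Y}
    [hpq : JointlyMono₂ p q] (w : p ≫ u = q ≫ v) : Mono (pullback.lift p q w) where
  right_cancellation g h hgh :=
    hpq.right_cancellation g h
      (by simpa only [Category.assoc, pullback.lift_fst] using hgh =≫ pullback.fst u v)
      (by simpa only [Category.assoc, pullback.lift_snd] using hgh =≫ pullback.snd u v)

namespace Endofunctor.Coalgebra

variable {C : Type*} [Category C] {F : C ⥤ C} [HasTerminal (Coalgebra F)]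

theorem hom_f_comp_terminal_from_f {r a : Coalgebra F} (g : r ⟶ a) :
    g.f ≫ (terminal.from a).f = (terminal.from r).f :=
  (comp_f g _).symm.trans (congrArg Hom.f (terminal.hom_ext _ _))

theorem span_comp_terminal_from_f {r a b : Coalgebra F} (ra : r ⟶ a) (rb : r ⟶ b) :
    ra.f ≫ (terminal.from a).f = rb.f ≫ (terminal.from b).f := by
  rw [hom_f_comp_terminal_from_f, hom_f_comp_terminal_from_f]

end Endofunctor.Coalgebra

end CategoryTheory

/-- If `C` is finitely complete and a final `F`-coalgebra exists, then for any
bisimulation `a ← r → b` there is a unique monomorphism `f` from the carrier of `r`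
into the pullback of the cospan given by the anamorphisms with `r_a = f ≫ p_a` and
`r_b = f ≫ p_b`. -/
theorem bisimulation_factors_through_pullback {C : Type*} [Category C]
    [HasFiniteLimits C] {F : C ⥤ C} [HasTerminal (Endofunctor.Coalgebra F)]
    {a b r : Endofunctor.Coalgebra F} (ra : r ⟶ a) (rb : r ⟶ b)
    (hbisim : IsBisimulation ra rb) :
    ∃! f : r.V ⟶ pullback (terminal.from a).f (terminal.from b).f,
      Mono f ∧
        ra.f = f ≫ pullback.fst (terminal.from a).f (terminal.from b).f ∧
        rb.f = f ≫ pullback.snd (terminal.from a).f (terminal.from b).f := by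
  have hcomm := Endofunctor.Coalgebra.span_comp_terminal_from_f ra rb
  have : JointlyMono₂ ra.f rb.f := ⟨hbisim⟩
  refine ⟨pullback.lift ra.f rb.f hcomm,
    ⟨JointlyMono₂.mono_pullback_lift hcomm, (pullback.lift_fst _ _ _).symm,
      (pullback.lift_snd _ _ _).symm⟩, ?_⟩
  rintro f ⟨-, hfst, hsnd⟩
  exact pullback.hom_ext (by rw [← hfst, pullback.lift_fst]) (by rw [← hsnd, pullback.lift_snd])
end

section
/- If C is finitely complete, F preserves pullbacks, and a final F-coalgebra exists, then the pullback of the cospan (carrier a) −⟦a⟧→ (carrier of final coalgebra) ←⟦b⟧− (carrier b) carries a coalgebra structure making its projections coalgebra morphisms, and this span is the greatest bisimulation of the F-coalgebras a and b. -/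
open CategoryTheory CategoryTheory.Limits

/-- If `C` is finitely complete, `F` preserves pullbacks, and a final `F`-coalgebra
exists, then the pullback of the cospan of anamorphisms carries a coalgebra structure
making the projections coalgebra morphisms, this span is jointly monic, and it is the
greatest bisimulation: every bisimulation of `a` and `b` factors through it. -/
theorem pullback_is_greatest_bisimulation {C : Type*} [Category C]
    [HasFiniteLimits C] {F : C ⥤ C} [PreservesLimitsOfShape WalkingCospan F]
    [HasTerminal (Endofunctor.Coalgebra F)] (a b : Endofunctor.Coalgebra F) :
    ∃ c : (pullback (terminal.from a).f (terminal.from b).f : C) ⟶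
        F.obj (pullback (terminal.from a).f (terminal.from b).f),
      c ≫ F.map (pullback.fst (terminal.from a).f (terminal.from b).f) =
          pullback.fst (terminal.from a).f (terminal.from b).f ≫ a.str ∧
      c ≫ F.map (pullback.snd (terminal.from a).f (terminal.from b).f) =
          pullback.snd (terminal.from a).f (terminal.from b).f ≫ b.str ∧
      (∀ ⦃Z : C⦄ (h h' : Z ⟶ pullback (terminal.from a).f (terminal.from b).f),
        h ≫ pullback.fst (terminal.from a).f (terminal.from b).f =
            h' ≫ pullback.fst (terminal.from a).f (terminal.from b).f →
        h ≫ pullback.snd (terminal.from a).f (terminal.from b).f =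
            h' ≫ pullback.snd (terminal.from a).f (terminal.from b).f →
        h = h') ∧
      (∀ (r : Endofunctor.Coalgebra F) (ra : r ⟶ a) (rb : r ⟶ b),
        IsBisimulation ra rb →
          ∃ u : r.V ⟶ pullback (terminal.from a).f (terminal.from b).f,
            u ≫ pullback.fst (terminal.from a).f (terminal.from b).f = ra.f ∧
            u ≫ pullback.snd (terminal.from a).f (terminal.from b).f = rb.f) := by
  set ta := terminal.from a
  set tb := terminal.from b
  have hcomm : (pullback.fst ta.f tb.f ≫ a.str) ≫ F.map ta.f =
      (pullback.snd ta.f tb.f ≫ b.str) ≫ F.map tb.f := by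
    have h1 := ta.h
    have h2 := tb.h
    calc (pullback.fst ta.f tb.f ≫ a.str) ≫ F.map ta.f
        = pullback.fst ta.f tb.f ≫ (a.str ≫ F.map ta.f) := by rw [Category.assoc]
      _ = pullback.fst ta.f tb.f ≫ ta.f ≫ (⊤_ _ : Endofunctor.Coalgebra F).str := by rw [h1]
      _ = (pullback.fst ta.f tb.f ≫ ta.f) ≫ (⊤_ _ : Endofunctor.Coalgebra F).str := by
          rw [Category.assoc]
      _ = (pullback.snd ta.f tb.f ≫ tb.f) ≫ (⊤_ _ : Endofunctor.Coalgebra F).str := by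
          rw [pullback.condition]
      _ = pullback.snd ta.f tb.f ≫ tb.f ≫ (⊤_ _ : Endofunctor.Coalgebra F).str := by
          rw [Category.assoc]
      _ = (pullback.snd ta.f tb.f ≫ b.str) ≫ F.map tb.f := by rw [← h2, Category.assoc]
  have : PreservesLimit (cospan ta.f tb.f) F := inferInstance
  refine ⟨pullback.lift (pullback.fst ta.f tb.f ≫ a.str) (pullback.snd ta.f tb.f ≫ b.str)
      hcomm ≫ inv (pullbackComparison F ta.f tb.f), ?_, ?_, ?_, ?_⟩
  · rw [Category.assoc, ← pullbackComparison_comp_fst F ta.f tb.f,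
      IsIso.inv_hom_id_assoc, pullback.lift_fst]
  · rw [Category.assoc, ← pullbackComparison_comp_snd F ta.f tb.f,
      IsIso.inv_hom_id_assoc, pullback.lift_snd]
  · intro Z h h' h1 h2
    exact pullback.hom_ext h1 h2
  · intro r ra rb _
    have hr : ra.f ≫ ta.f = rb.f ≫ tb.f := by
      have : ra ≫ ta = rb ≫ tb := by
        apply Subsingleton.elim
      have := congrArg Endofunctor.Coalgebra.Hom.f this
      simpa using this
    exact ⟨pullback.lift ra.f rb.f hr, pullback.lift_fst _ _ _, pullback.lift_snd _ _ _⟩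
end

section
/- The category of N-detectors (coalgebras for D X = (1 + X)^N on Set) has a final object whose carrier is the set of prefix-free subsets of N⁺, with structure map sending P to the function n ↦ ⇓ if n ∈ P, and n ↦ n⁻¹·P otherwise; the unique morphism from a detector a sends x to the set of nonempty words u with a⁺(x, u) = ⇓ and a⁺(x, u[0..k)) ≠ ⇓ for all 0 < k < |u|. -/
open scoped Classical

/-- A set of words is prefix-free if no element has a proper prefix in the set. -/
def IsPrefixFree {N : Type*} (P : Set (List N)) : Prop :=
  ∀ u ∈ P, ∀ m : ℕ, m < u.length → u.take m ∉ P

/-- Prefix-free subsets of `N⁺`: the carrier of the final detector. -/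
def PFSet (N : Type*) : Type _ :=
  {P : Set (List N) // (∀ u ∈ P, u ≠ []) ∧ IsPrefixFree P}

/-- Structure map of the final detector: `P ↦ (n ↦ ⇓ if n ∈ P, else n⁻¹·P)`. -/
noncomputable def finalD {N : Type*} (P : PFSet N) (n : N) : Option (PFSet N) :=
  if h : [n] ∈ P.1 then none
  else
    some ⟨{u | n :: u ∈ P.1}, by
      constructor
      · rintro u hu rfl; exact h hu
      · intro u hu m hm htake
        have : (n :: u).take (m + 1) ∈ P.1 := by simpa using htake
        exact P.2.2 (n :: u) hu (m + 1) (by simpa using Nat.succ_lt_succ hm) this⟩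

/-- A detector morphism: `(a x)(n) = ⇓` iff `(b (f x))(n) = ⇓`, and values are mapped
by `f` when defined. -/
def DetMorph {A B N : Type*} (a : A → N → Option A) (b : B → N → Option B)
    (f : A → B) : Prop :=
  ∀ x n, Option.map f (a x n) = b (f x) n

/-- The extension of a detector to words, propagating `⇓`. -/
def aplus {A N : Type*} (a : A → N → Option A) : A → List N → Option A
  | x, [] => some x
  | x, n :: u => (a x n).bind fun y => aplus a y u

section Aux

variable {A N : Type*} (a : A → N → Option A)

/-- The defining condition of the unique morphism. -/
def Cond (x : A) (u : List N) : Prop :=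
  u ≠ [] ∧ aplus a x u = none ∧
    ∀ k : ℕ, 0 < k → k < u.length → aplus a x (u.take k) ≠ none

lemma aplus_cons (x : A) (n : N) (u : List N) :
    aplus a x (n :: u) = (a x n).bind fun y => aplus a y u := rfl

lemma cond_cons_none {x : A} {n : N} (h : a x n = none) (u : List N) :
    Cond a x (n :: u) ↔ u = [] := by
  constructor
  · rintro ⟨-, -, h3⟩
    by_contra hu
    have : aplus a x ((n :: u).take 1) = none := by
      simp [aplus_cons, aplus, h]
    exact h3 1 one_pos (by
      have := List.length_pos_iff.mpr hu
      simp; omega) this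
  · rintro rfl
    refine ⟨by simp, by simp [aplus_cons, h], ?_⟩
    intro k hk hk'
    simp at hk'
    omega

lemma cond_cons_some {x y : A} {n : N} (h : a x n = some y) (u : List N) :
    Cond a x (n :: u) ↔ Cond a y u := by
  have hap : aplus a x (n :: u) = aplus a y u := by simp [aplus_cons, h]
  constructor
  · rintro ⟨-, h2, h3⟩
    have hu : u ≠ [] := by
      rintro rfl
      simp [aplus_cons, h, aplus] at h2
    refine ⟨hu, by rwa [hap] at h2, ?_⟩
    intro k hk hk'
    have := h3 (k + 1) (Nat.succ_pos _) (by simpa using Nat.succ_lt_succ hk')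
    simpa [List.take_succ_cons, aplus_cons, h] using this
  · rintro ⟨h1, h2, h3⟩
    refine ⟨by simp, by rwa [hap], ?_⟩
    intro k hk hk'
    match k, hk with
    | 1, _ => simp [aplus_cons, aplus, h]
    | (j + 2), _ =>
      have hj : 0 < j + 1 := Nat.succ_pos _
      have hj' : j + 1 < u.length := by simp at hk'; omega
      have := h3 (j + 1) hj hj'
      simpa [List.take_succ_cons, aplus_cons, h] using this

lemma finalD_eq_none_iff (P : PFSet N) (n : N) : finalD P n = none ↔ [n] ∈ P.1 := by
  unfold finalD
  split <;> simp_all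

lemma finalD_eq_some (P Q : PFSet N) (n : N) (h : finalD P n = some Q) :
    Q.1 = {u | n :: u ∈ P.1} := by
  unfold finalD at h
  split at h
  · simp at h
  · cases h
    rfl

lemma char {f : A → PFSet N} (hf : DetMorph a finalD f) :
    ∀ u : List N, ∀ x : A, u ∈ (f x).1 ↔ Cond a x u := by
  intro u
  induction u with
  | nil =>
    intro x
    simp only [Cond]
    constructor
    · intro h; exact absurd rfl ((f x).2.1 _ h)
    · rintro ⟨h, -⟩; exact absurd rfl h
  | cons n u ih =>
    intro x
    have hf' := hf x n
    cases h : a x n with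
    | none =>
      rw [h] at hf'
      have hn : [n] ∈ (f x).1 := (finalD_eq_none_iff _ n).mp hf'.symm
      rw [cond_cons_none a h]
      constructor
      · intro hmem
        by_contra hu
        have h1 : (0:ℕ) < (n :: u).length := by simp
        have hlt : 1 < (n :: u).length := by
          have := List.length_pos_iff.mpr hu
          simp; omega
        have := (f x).2.2 (n :: u) hmem 1 hlt
        simp at this
        exact this hn
      · rintro rfl
        exact hn
    | some y =>
      rw [h] at hf'
      have hsome : finalD (f x) n = some (f y) := hf'.symm
      have hQ := finalD_eq_some (f x) (f y) n hsome
      rw [cond_cons_some a h]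
      constructor
      · intro hmem
        exact (ih y).mp (by rw [hQ]; exact hmem)
      · intro hc
        have : u ∈ (f y).1 := (ih y).mpr hc
        rw [hQ] at this
        exact this

/-- The candidate unique morphism. -/
def Fmor (x : A) : PFSet N :=
  ⟨{u | Cond a x u}, by
    constructor
    · intro u hu; exact hu.1
    · intro u hu m hm htake
      rcases Nat.eq_zero_or_pos m with rfl | hmpos
      · exact htake.1 (by simp)
      · exact hu.2.2 m hmpos hm htake.2.1⟩

lemma Fmor_morph : DetMorph a finalD (Fmor a) := by
  intro x n
  cases h : a x n with
  | none =>
    have hn : [n] ∈ (Fmor a x).1 := (cond_cons_none a h []).mpr rfl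
    simp [(finalD_eq_none_iff (Fmor a x) n).mpr hn]
  | some y =>
    have hn : [n] ∉ (Fmor a x).1 := by
      intro hmem
      exact ((cond_cons_some a h []).mp hmem).1 rfl
    simp only [Option.map_some]
    unfold finalD
    rw [dif_neg hn]
    congr 1
    apply Subtype.ext
    ext u
    exact ((cond_cons_some a h u)).symm

end Aux

/-- The category of `N`-detectors has a final object with carrier the prefix-free
subsets of `N⁺` and structure map `finalD`; the unique morphism from a detector `a`
sends `x` to the set of nonempty words `u` with `a⁺(x, u) = ⇓` and
`a⁺(x, u[0..k)) ≠ ⇓` for all `0 < k < |u|`. -/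
theorem final_detector (N A : Type) [Fintype N] (a : A → N → Option A) :
    (∃! f : A → PFSet N, DetMorph a finalD f) ∧
    (∀ f : A → PFSet N, DetMorph a finalD f → ∀ x : A,
      (f x).1 = {u : List N | u ≠ [] ∧ aplus a x u = none ∧
        ∀ k : ℕ, 0 < k → k < u.length → aplus a x (u.take k) ≠ none}) := by
  have hchar : ∀ f : A → PFSet N, DetMorph a finalD f → ∀ x : A,
      (f x).1 = {u : List N | u ≠ [] ∧ aplus a x u = none ∧
        ∀ k : ℕ, 0 < k → k < u.length → aplus a x (u.take k) ≠ none} := by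
    intro f hf x
    ext u
    exact char a hf u x
  refine ⟨⟨Fmor a, Fmor_morph a, ?_⟩, hchar⟩
  intro g hg
  funext x
  apply Subtype.ext
  rw [hchar g hg x, hchar (Fmor a) (Fmor_morph a) x]
end

section
/- For any detector a : A → (1+A)^N and state x ∈ A, the set Constr(a, x) = {s ∈ N^ℕ | the anamorphism of Join([s], a) sends (s, x) to ∞} is a safety constraint: any stream all of whose finite prefixes are prefixes of elements of Constr(a, x) itself belongs to Constr(a, x). -/
open scoped Classical

/-- The carrier of the output-system `[s]`: the set of tail shifts of the stream `s`. -/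
def Tails {N : Type*} (s : ℕ → N) : Type _ :=
  {t : ℕ → N // ∃ k : ℕ, t = fun i => s (k + i)}

/-- Output of `[s]`: `t ↦ t 0`. -/
def tailsOut {N : Type*} {s : ℕ → N} (t : Tails s) : N := t.1 0

/-- Transition of `[s]`: `t ↦ t[1..)`. -/
def tailsTr {N : Type*} {s : ℕ → N} (t : Tails s) : Tails s :=
  ⟨fun i => t.1 (i + 1), by
    obtain ⟨k, hk⟩ := t.2
    exact ⟨k + 1, by funext i; simp only [hk]; congr 1; omega⟩⟩

/-- The `Join` of a system with output and a detector. -/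
def joinMap {A B N : Type*} (out : A → N) (tr : A → A) (a : B → N → Option B) :
    A × B → Option (A × B) :=
  fun p => (a p.2 (out p.1)).map fun y => (tr p.1, y)

/-- The `m`-fold Kleisli iterate of a partial self-map, propagating `⇓`. -/
def kiter {X : Type*} (g : X → Option X) : ℕ → X → Option X
  | 0, x => some x
  | k + 1, x => (kiter g k x).bind g

/-- The anamorphism of a `T`-coalgebra into the final `T`-coalgebra `ℕ ∪ {∞}`:
`∞` iff all Kleisli iterates are defined. -/
noncomputable def anaT {X : Type*} (g : X → Option X) : X → ℕ∞ := fun x =>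
  if h : ∃ k : ℕ, kiter g (k + 1) x = none then (Nat.find h : ℕ∞) else ⊤

/-- `Constr(a, x)`: the streams `s` whose run in `Join([s], a)` from `(s, x)` never
terminates, i.e. the anamorphism sends `(s, x)` to `∞`. -/
noncomputable def constr {A N : Type*} (a : A → N → Option A) (x : A) :
    Set (ℕ → N) :=
  {s | anaT (joinMap (tailsOut (s := s)) tailsTr a)
      (⟨s, ⟨0, by funext i; simp⟩⟩, x) = ⊤}

/-- A safety constraint: `S` contains any stream all of whose finite prefixes are
prefixes of elements of `S`. -/
def IsSafety {N : Type*} (S : Set (ℕ → N)) : Prop :=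
  ∀ s : ℕ → N, (∀ m : ℕ, ∃ s' ∈ S, ∀ k < m, s' k = s k) → s ∈ S

/-!
Unfolding the join, the `m`-th Kleisli iterate from `(s, x)` is defined exactly when the detector
survives the prefix `s[0..m)`. Membership in `Constr(a, x)` is thus a conjunction of conditions each
of which depends on a finite prefix only, and such a set is closed under agreement on all prefixes.
-/

theorem anaT_eq_top_iff {X : Type*} (g : X → Option X) (x : X) :
    anaT g x = ⊤ ↔ ∀ m, kiter g m x ≠ none := by
  unfold anaT
  split_ifs with h
  · obtain ⟨k, hk⟩ := h
    simpa using ⟨k + 1, hk⟩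
  · push Not at h
    simp only [true_iff]
    rintro (_ | k)
    · simp [kiter]
    · exact h k

theorem kiter_joinMap {A B N : Type*} (out : A → N) (tr : A → A) (a : B → N → Option B)
    (p : A) (x : B) (m : ℕ) :
    kiter (joinMap out tr a) m (p, x) =
      (((List.range m).map fun i => out (tr^[i] p)).foldlM a x).map (tr^[m] p, ·) := by
  induction m with
  | zero => rfl
  | succ m ih =>
    simp only [kiter, ih, Option.bind_map, List.range_succ, List.map_append,
      List.foldlM_append]
    simp [joinMap, Function.comp_def, Function.iterate_succ_apply']

theorem tailsOut_iterate_tailsTr {N : Type*} {s : ℕ → N} (t : Tails s) (i : ℕ) :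
    tailsOut (tailsTr^[i] t) = t.1 i := by
  induction i generalizing t with
  | zero => rfl
  | succ i ih => exact (ih (tailsTr t)).trans (congrArg t.1 (by omega))

theorem kiter_joinMap_tails {A N : Type*} (a : A → N → Option A) {s : ℕ → N} (t : Tails s)
    (x : A) (m : ℕ) :
    kiter (joinMap tailsOut tailsTr a) m (t, x) =
      (((List.range m).map t.1).foldlM a x).map (tailsTr^[m] t, ·) := by
  simp only [kiter_joinMap, tailsOut_iterate_tailsTr]

theorem mem_constr_iff {A N : Type*} (a : A → N → Option A) (x : A) (s : ℕ → N) :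
    s ∈ constr a x ↔ ∀ m, ((List.range m).map s).foldlM a x ≠ none := by
  rw [constr, Set.mem_ofPred_eq, anaT_eq_top_iff]
  refine forall_congr' fun m => ?_
  -- `constr` types its initial state as the unfolded subtype rather than `Tails s`
  erw [kiter_joinMap_tails]
  simp

theorem constr_isSafety_general (N A : Type) (a : A → N → Option A) (x : A) :
    IsSafety (constr a x) := by
  intro s hs
  rw [mem_constr_iff]
  intro m
  obtain ⟨s', hs', hprefix⟩ := hs m
  have hsame : (List.range m).map s' = (List.range m).map s :=
    List.map_congr_left fun k hk => hprefix k (List.mem_range.1 hk)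
  exact hsame ▸ (mem_constr_iff a x s').1 hs' m

/-- For any detector `a` and state `x`, the set `Constr(a, x)` is a safety
constraint. -/
theorem constr_isSafety (N A : Type) [Fintype N] (a : A → N → Option A) (x : A) :
    IsSafety (constr a x) :=
  constr_isSafety_general N A a x
end

section
/- For any safety constraint S ⊆ N^ℕ there exists a detector a_S and a state x such that Constr(a_S, x) = S; specifically, take the carrier to be {ε} ∪ {u ∈ N⁺ | u = s[0..|u|) for some s ∈ S}, the structure map a_S(u)(n) = ⇓ if un is not in the carrier and un otherwise, and x = ε. -/
open scoped Classical

/-- The carrier of the detector `a_S`: `{ε} ∪ {u ∈ N⁺ | u = s[0..|u|) for some s ∈ S}`. -/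
def carS {N : Type*} (S : Set (ℕ → N)) : Set (List N) :=
  {u | u = [] ∨ ∃ s ∈ S, u = (List.range u.length).map s}

/-- The detector `a_S`: `a_S(u)(n) = un` if `un` lies in the carrier, else `⇓`. -/
noncomputable def detS {N : Type*} (S : Set (ℕ → N))
    (u : {u : List N // u ∈ carS S}) (n : N) : Option {u : List N // u ∈ carS S} :=
  if h : u.1 ++ [n] ∈ carS S then some ⟨u.1 ++ [n], h⟩ else none

/-! Run from `ε`, the detector `a_S` survives a word exactly when the word lies in its carrier,
because the carrier is closed under prefixes. A word `s[0..m)` with `m > 0` lies in the carrier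
iff `s` agrees below `m` with some element of `S`, and the safety condition says precisely that
this for every `m` forces `s ∈ S`. -/

section Detector

variable {N : Type*} {S : Set (ℕ → N)}

theorem carS_of_isPrefix {u w : List N} (hw : w ∈ carS S) (h : u <+: w) : u ∈ carS S := by
  rcases hw with rfl | ⟨s, hs, hws⟩
  · exact Or.inl (List.prefix_nil.mp h)
  · obtain ⟨t, rfl⟩ := h
    refine Or.inr ⟨s, hs, ?_⟩
    have hu := congrArg (List.take u.length) hws
    rwa [List.take_left, ← List.map_take, List.take_range,
      min_eq_left (by simp)] at hu

theorem aplus_detS_ne_none_iff (v : List N) :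
    ∀ (u : List N) (hu : u ∈ carS S), aplus (detS S) ⟨u, hu⟩ v ≠ none ↔ u ++ v ∈ carS S := by
  induction v with
  | nil => intro u hu; simpa [aplus] using hu
  | cons n v ih =>
    intro u hu
    by_cases hun : u ++ [n] ∈ carS S
    · simpa [aplus, detS, hun] using ih (u ++ [n]) hun
    · have hnot : u ++ n :: v ∉ carS S := fun h =>
        hun (carS_of_isPrefix h ⟨v, by simp⟩)
      simp [aplus, detS, hun, hnot]

theorem map_range_mem_carS_iff {s : ℕ → N} {m : ℕ} (hm : 0 < m) :
    (List.range m).map s ∈ carS S ↔ ∃ s' ∈ S, ∀ k < m, s' k = s k := by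
  have hne : (List.range m).map s ≠ [] := by simpa using hm.ne'
  simp only [carS, Set.mem_ofPred_eq, hne, false_or, List.length_map, List.length_range,
    List.map_inj_left, List.mem_range, eq_comm (a := s _)]

end Detector

theorem safety_has_detector_general (N : Type) (S : Set (ℕ → N))
    (hS : IsSafety S) :
    {s : ℕ → N | ∀ m : ℕ, 0 < m →
        aplus (detS S) ⟨[], Or.inl rfl⟩ ((List.range m).map s) ≠ none} = S := by
  ext s
  have hprefix : ∀ m, 0 < m → (aplus (detS S) ⟨[], Or.inl rfl⟩ ((List.range m).map s) ≠ none ↔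
      ∃ s' ∈ S, ∀ k < m, s' k = s k) := fun m hm => by
    rw [aplus_detS_ne_none_iff _ [] (Or.inl rfl), List.nil_append, map_range_mem_carS_iff hm]
  constructor
  · intro h
    refine hS s fun m => ?_
    obtain ⟨s', hs', hagree⟩ := (hprefix (m + 1) m.succ_pos).1 (h _ m.succ_pos)
    exact ⟨s', hs', fun k hk => hagree k (by omega)⟩
  · exact fun hs m hm => (hprefix m hm).2 ⟨s, hs, fun _ _ => rfl⟩

/-- For any safety constraint `S`, the detector `a_S` with initial state `ε`
recognises exactly `S`: `Constr(a_S, ε) = S`. -/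
theorem safety_has_detector (N : Type) [Fintype N] (S : Set (ℕ → N))
    (hS : IsSafety S) :
    {s : ℕ → N | ∀ m : ℕ, 0 < m →
        aplus (detS S) ⟨[], Or.inl rfl⟩ ((List.range m).map s) ≠ none} = S :=
  safety_has_detector_general N S hS
end
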